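/- Let K be a field and R = K[s, a_1, a_2, b_1, c_1, t]. The join-meet ideal of the lattice L₃(2,1,1), generated by {a_1 b_1 − st, a_1 c_1 − st, a_2 b_1 − st, a_2 c_1 − st, b_1 c_1 − st}, is a radical ideal. -/

import Mathlib

open MvPolynomial

/-- The variables of `K[s, a_1, a_2, b_1, c_1, t]`. -/
inductive V16 : Type where
  | s | a1 | a2 | b1 | c1 | t
deriving DecidableEq

/-!
Put `I` for the ideal. Modulo `I + (st)` every product of two incomparable variables vanishes,
so `I + (st)` is the squarefree monomial ideal of the edges `a₁b₁, a₁c₁, a₂b₁, a₂c₁, b₁c₁, st`,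
which is the intersection of the primes generated by its vertex covers. On the other side, the
kernel `P` of the toric map `s ↦ x², t ↦ y², a₁, a₂, b₁, c₁ ↦ xy` is prime, contains `I`, misses
`st` and satisfies `st · P ⊆ I`; hence `I = (I + (st)) ∩ P` is an intersection of radical ideals.
To see `st · P ⊆ I`, one shows that `P = (a₂ - a₁, b₁ - a₁, c₁ - a₁, a₁² - st)`: modulo these
generators every polynomial is `A(s, t) + a₁ B(s, t)`, with image `A(x², y²) + xy B(x², y²)`, and
the parity of the exponents of `x` separates the two summands.
-/

namespace MvPolynomial

variable {σ R : Type*} [CommRing R]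

theorem sub_aeval_mem_of_forall_X_sub_mem {I : Ideal (MvPolynomial σ R)}
    {g : σ → MvPolynomial σ R} (hg : ∀ i, X i - g i ∈ I) (f : MvPolynomial σ R) :
    f - aeval g f ∈ I := by
  have hX : (fun i => Ideal.Quotient.mkₐ R I (X i)) = fun i => Ideal.Quotient.mkₐ R I (g i) :=
    _root_.funext fun i => Ideal.Quotient.eq.mpr (hg i)
  rw [← Ideal.Quotient.eq, ← Ideal.Quotient.mkₐ_eq_mk R, comp_aeval_apply, ← hX,
    ← comp_aeval_apply, aeval_X_left_apply]

theorem isPrime_span_X_image [IsDomain R] (C : Set σ) :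
    (Ideal.span (X '' C : Set (MvPolynomial σ R))).IsPrime := by
  classical
  let g : σ → MvPolynomial σ R := fun i => if i ∈ C then 0 else X i
  suffices Ideal.span (X '' C) = RingHom.ker (aeval g) from this ▸ RingHom.ker_isPrime _
  refine le_antisymm (Ideal.span_le.mpr ?_) fun f hf => ?_
  · rintro _ ⟨i, hi, rfl⟩
    simp [g, hi]
  · have hg : ∀ i, X i - g i ∈ Ideal.span (X '' C : Set (MvPolynomial σ R)) := fun i => by
      by_cases hi : i ∈ C
      · simpa [g, hi] using Ideal.subset_span (Set.mem_image_of_mem X hi)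
      · simp [g, hi]
    have := sub_aeval_mem_of_forall_X_sub_mem hg f
    rwa [RingHom.mem_ker.mp hf, sub_zero] at this

theorem span_monomial_eq_iInf_span_X_image [Nontrivial R] {S : Set (σ →₀ ℕ)}
    (hS : ∀ e ∈ S, ∀ i, e i ≤ 1) :
    Ideal.span ((fun e => monomial e (1 : R)) '' S) =
      ⨅ (C : Set σ) (_ : ∀ e ∈ S, ∃ i ∈ C, e i ≠ 0), Ideal.span (X '' C) := by
  classical
  refine le_antisymm (le_iInf₂ fun C hC => Ideal.span_le.mpr ?_) fun f hf => ?_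
  · rintro _ ⟨e, he, rfl⟩
    refine mem_ideal_span_X_image.mpr fun m hm => ?_
    rw [support_monomial, if_neg one_ne_zero, Finset.mem_singleton] at hm
    exact hm ▸ hC e he
  · refine mem_ideal_span_monomial_image.mpr fun m hm => ?_
    by_contra! hm_min
    have hC : ∀ e ∈ S, ∃ i ∈ {i | m i = 0}, e i ≠ 0 := fun e he => by
      obtain ⟨i, hi⟩ : ∃ i, m i < e i := by simpa [Finsupp.le_def] using hm_min e he
      exact ⟨i, show m i = 0 by have := hS e he i; omega, by omega⟩
    have hfC := (Submodule.mem_iInf _).mp ((Submodule.mem_iInf _).mp hf _) hC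
    obtain ⟨i, hi, hmi⟩ := mem_ideal_span_X_image.mp hfC m hm
    exact hmi hi

theorem isRadical_span_monomial_of_le_one [IsDomain R] {S : Set (σ →₀ ℕ)}
    (hS : ∀ e ∈ S, ∀ i, e i ≤ 1) :
    (Ideal.span ((fun e => monomial e (1 : R)) '' S)).IsRadical := by
  rw [span_monomial_eq_iInf_span_X_image hS]
  exact Ideal.isRadical_iInf _ fun C => Ideal.isRadical_iInf _ fun _ =>
    (isPrime_span_X_image C).isRadical

theorem isRadical_span_X_mul_X [IsDomain R] {S : Set (σ × σ)} (hS : ∀ p ∈ S, p.1 ≠ p.2) :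
    (Ideal.span ((fun p => X p.1 * X p.2) '' S : Set (MvPolynomial σ R))).IsRadical := by
  classical
  have hX : (fun p : σ × σ => (X p.1 * X p.2 : MvPolynomial σ R)) =
      (fun e => monomial e 1) ∘ fun p => Finsupp.single p.1 1 + Finsupp.single p.2 1 := by
    funext p
    simp [X, monomial_mul]
  rw [hX, Set.image_comp]
  refine isRadical_span_monomial_of_le_one ?_
  rintro _ ⟨p, hp, rfl⟩ i
  have := hS p hp
  simp only [Finsupp.add_apply, Finsupp.single_apply]
  split_ifs <;> simp_all

theorem eq_zero_of_expand_two_add_X_mul_X_mul_expand_two_eq_zero [IsDomain R] {i j : σ}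
    (hij : i ≠ j) {A B : MvPolynomial σ R}
    (h : expand 2 A + X i * X j * expand 2 B = 0) : A = 0 ∧ B = 0 := by
  classical
  have hodd : ∀ m : σ →₀ ℕ, 2 ∣ m i → coeff m (X i * X j * expand 2 B) = 0 := fun m hm => by
    rw [show (X i * X j : MvPolynomial σ R) = monomial (Finsupp.single i 1 + Finsupp.single j 1) 1
      by simp [X, monomial_mul], coeff_monomial_mul']
    split_ifs with hle
    · refine mul_eq_zero_of_right _ (coeff_expand_of_not_dvd _ (i := i) ?_)
      have hsi : (Finsupp.single i 1 + Finsupp.single j 1 : σ →₀ ℕ) i = 1 := by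
        simp [hij.symm]
      have := hle i
      rw [hsi] at this
      rw [Finsupp.tsub_apply, hsi]
      omega
    · rfl
  have hA : A = 0 := by
    ext d
    have := congr_arg (coeff (2 • d)) h
    rwa [coeff_add, coeff_expand_smul _ two_ne_zero, hodd _ (by simp), add_zero] at this
  refine ⟨hA, ?_⟩
  rw [hA, map_zero, zero_add] at h
  simpa [X_ne_zero, expand_eq_zero] using h

end MvPolynomial

namespace Ideal

variable {R : Type*} [CommRing R]

theorem span_image_sub_sup_span_singleton (x : R) (G : Set R) :
    span ((· - x) '' G) ⊔ span {x} = span (insert x G) := by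
  have hx : x ∈ span (insert x G) := subset_span (Set.mem_insert x G)
  refine le_antisymm (sup_le (span_le.mpr ?_) ((span_singleton_le_iff_mem _).mpr hx))
    (span_le.mpr (Set.insert_subset (mem_sup_right (mem_span_singleton_self x)) fun g hg => ?_))
  · rintro _ ⟨g, hg, rfl⟩
    exact sub_mem (subset_span (Set.mem_insert_of_mem x hg)) hx
  · simpa using add_mem (mem_sup_left (subset_span (Set.mem_image_of_mem (· - x) hg)))
      (mem_sup_right (mem_span_singleton_self x) : x ∈ span ((· - x) '' G) ⊔ span {x})

theorem sup_span_singleton_inf_eq {I P : Ideal R} [P.IsPrime] {x : R} (hIP : I ≤ P)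
    (hx : x ∉ P) (hPx : ∀ p ∈ P, p * x ∈ I) : (I ⊔ span {x}) ⊓ P = I := by
  refine le_antisymm (fun f ⟨hfI, hfP⟩ => ?_) (le_inf le_sup_left hIP)
  obtain ⟨i, hi, _, hy, rfl⟩ := Submodule.mem_sup.mp hfI
  obtain ⟨r, rfl⟩ := mem_span_singleton'.mp hy
  have hrx : r * x ∈ P := by simpa using sub_mem hfP (hIP hi)
  exact add_mem hi (hPx r ((IsPrime.mem_or_mem ‹_› hrx).resolve_right hx))

end Ideal

namespace V16

variable (K : Type*) [Field K]

noncomputable def joinMeetIdeal : Ideal (MvPolynomial V16 K) :=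
  Ideal.span
    {X a1 * X b1 - X s * X t, X a1 * X c1 - X s * X t, X a2 * X b1 - X s * X t,
      X a2 * X c1 - X s * X t, X b1 * X c1 - X s * X t}

theorem joinMeetIdeal_sup_span_X_s_mul_X_t :
    joinMeetIdeal K ⊔ Ideal.span {X s * X t} = Ideal.span ((fun p => X p.1 * X p.2) ''
      {(s, t), (a1, b1), (a1, c1), (a2, b1), (a2, c1), (b1, c1)}) := by
  simp only [joinMeetIdeal, Set.image_insert_eq, Set.image_singleton]
  rw [← Ideal.span_image_sub_sup_span_singleton (X s * X t)]
  simp only [Set.image_insert_eq, Set.image_singleton]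

theorem isRadical_joinMeetIdeal_sup_span_X_s_mul_X_t :
    (joinMeetIdeal K ⊔ Ideal.span {X s * X t}).IsRadical := by
  rw [joinMeetIdeal_sup_span_X_s_mul_X_t]
  refine isRadical_span_X_mul_X fun p hp => ?_
  simp only [Set.mem_insert_iff, Set.mem_singleton_iff] at hp
  rcases hp with rfl | rfl | rfl | rfl | rfl | rfl <;> decide

noncomputable def toricParam : MvPolynomial V16 K →ₐ[K] MvPolynomial (Fin 2) K :=
  aeval fun
    | s => X 0 ^ 2
    | t => X 1 ^ 2
    | _ => X 0 * X 1

noncomputable def toricIdeal : Ideal (MvPolynomial V16 K) :=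
  Ideal.span {X a2 - X a1, X b1 - X a1, X c1 - X a1, X a1 ^ 2 - X s * X t}

theorem toricParam_comp_rename : (toricParam K).comp (rename ![s, t]) = expand 2 := by
  refine algHom_ext fun i => ?_
  fin_cases i <;> simp [toricParam]

theorem toricIdeal_le_ker_toricParam : toricIdeal K ≤ RingHom.ker (toricParam K) := by
  simp only [toricIdeal, Ideal.span_le, Set.insert_subset_iff, Set.singleton_subset_iff,
    SetLike.mem_coe, RingHom.mem_ker, toricParam, aeval_X, map_sub, map_mul, map_pow, sub_self,
    true_and]
  ring

theorem X_eq_rename_or_X_sub_X_a1_mem_toricIdeal (v : V16) :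
    (∃ i, X v = rename ![s, t] (X i : MvPolynomial (Fin 2) K)) ∨ X v - X a1 ∈ toricIdeal K := by
  cases v with
  | s => exact .inl ⟨0, by simp⟩
  | t => exact .inl ⟨1, by simp⟩
  | a1 => exact .inr (by simp)
  | _ => exact .inr (Ideal.subset_span (by simp))

theorem exists_sub_rename_add_rename_mul_X_a1_mem_toricIdeal (f : MvPolynomial V16 K) :
    ∃ A B : MvPolynomial (Fin 2) K,
      f - (rename ![s, t] A + rename ![s, t] B * X a1) ∈ toricIdeal K := by
  induction f using MvPolynomial.induction_on with
  | C c => exact ⟨C c, 0, by simp⟩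
  | add p q hp hq =>
    obtain ⟨A, B, hAB⟩ := hp
    obtain ⟨A', B', hAB'⟩ := hq
    refine ⟨A + A', B + B', ?_⟩
    convert add_mem hAB hAB' using 1
    simp only [map_add]
    ring
  | mul_X p v hp =>
    obtain ⟨A, B, hAB⟩ := hp
    rcases X_eq_rename_or_X_sub_X_a1_mem_toricIdeal K v with ⟨i, hi⟩ | hv
    · refine ⟨A * X i, B * X i, ?_⟩
      convert Ideal.mul_mem_right (X v) _ hAB using 1
      simp only [map_mul, hi]
      ring
    · -- `X v ≡ a₁` and `a₁² ≡ st` modulo `toricIdeal K`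
      refine ⟨B * (X 0 * X 1), A, ?_⟩
      have hq : X a1 ^ 2 - X s * X t ∈ toricIdeal K := Ideal.subset_span (by simp)
      convert add_mem (add_mem (Ideal.mul_mem_right (X v) _ hAB)
        (Ideal.mul_mem_left _ (rename ![s, t] A + rename ![s, t] B * X a1) hv))
        (Ideal.mul_mem_left _ (rename ![s, t] B) hq) using 1
      simp only [map_mul, rename_X, Matrix.cons_val_zero, Matrix.cons_val_one]
      ring

theorem ker_toricParam : RingHom.ker (toricParam K) = toricIdeal K := by
  refine le_antisymm (fun f hf => ?_) (toricIdeal_le_ker_toricParam K)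
  obtain ⟨A, B, hAB⟩ := exists_sub_rename_add_rename_mul_X_a1_mem_toricIdeal K f
  have hAB0 : expand 2 A + X 0 * X 1 * expand 2 B = 0 := by
    have h := toricIdeal_le_ker_toricParam K hAB
    have ha1 : toricParam K (X a1) = X 0 * X 1 := by simp [toricParam]
    rw [RingHom.mem_ker, map_sub, RingHom.mem_ker.mp hf, map_add, map_mul, ← AlgHom.comp_apply,
      ← AlgHom.comp_apply, toricParam_comp_rename, ha1] at h
    linear_combination -h
  obtain ⟨rfl, rfl⟩ := eq_zero_of_expand_two_add_X_mul_X_mul_expand_two_eq_zero (by decide) hAB0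
  simpa using hAB

theorem isPrime_toricIdeal : (toricIdeal K).IsPrime :=
  ker_toricParam K ▸ RingHom.ker_isPrime _

theorem X_s_mul_X_t_notMem_toricIdeal : X s * X t ∉ toricIdeal K := by
  rw [← ker_toricParam, RingHom.mem_ker]
  simp [toricParam, X_ne_zero]

theorem joinMeetIdeal_le_toricIdeal : joinMeetIdeal K ≤ toricIdeal K := by
  rw [← ker_toricParam]
  simp only [joinMeetIdeal, Ideal.span_le, Set.insert_subset_iff, Set.singleton_subset_iff,
    SetLike.mem_coe, RingHom.mem_ker, toricParam, aeval_X, map_sub, map_mul, and_self]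
  ring

theorem mem_joinMeetIdeal_of_eq {f : MvPolynomial V16 K} (c₁ c₂ c₃ c₄ c₅ : MvPolynomial V16 K)
    (h : f = c₁ * (X a1 * X b1 - X s * X t) + c₂ * (X a1 * X c1 - X s * X t) +
      c₃ * (X a2 * X b1 - X s * X t) + c₄ * (X a2 * X c1 - X s * X t) +
      c₅ * (X b1 * X c1 - X s * X t)) :
    f ∈ joinMeetIdeal K := by
  have hgen : ∀ g ∈ ({X a1 * X b1 - X s * X t, X a1 * X c1 - X s * X t, X a2 * X b1 - X s * X t,
      X a2 * X c1 - X s * X t, X b1 * X c1 - X s * X t} : Set (MvPolynomial V16 K)),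
      ∀ c, c * g ∈ joinMeetIdeal K :=
    fun g hg c => Ideal.mul_mem_left _ c (Ideal.subset_span hg)
  rw [h]
  refine add_mem (add_mem (add_mem (add_mem ?_ ?_) ?_) ?_) ?_ <;> exact hgen _ (by simp) _

theorem mul_X_s_mul_X_t_mem_joinMeetIdeal {p : MvPolynomial V16 K} (hp : p ∈ toricIdeal K) :
    p * (X s * X t) ∈ joinMeetIdeal K := by
  suffices toricIdeal K ≤ (joinMeetIdeal K).colon {X s * X t} from
    Submodule.mem_colon_singleton.mp (this hp)
  simp only [toricIdeal, Ideal.span_le, Set.insert_subset_iff, Set.singleton_subset_iff,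
    SetLike.mem_coe, Submodule.mem_colon_singleton, smul_eq_mul]
  refine ⟨?_, ?_, ?_, ?_⟩
  · exact mem_joinMeetIdeal_of_eq K 0 (-X a2) 0 (X a1) 0 (by ring)
  · exact mem_joinMeetIdeal_of_eq K 0 (-X b1) 0 0 (X a1) (by ring)
  · exact mem_joinMeetIdeal_of_eq K (-X c1) 0 0 0 (X a1) (by ring)
  · exact mem_joinMeetIdeal_of_eq K (X s * X t) (X a1 * X b1) 0 0 (-X a1 ^ 2) (by ring)

end V16

/-- the join-meet ideal of the lattice `L₃(2,1,1)`, generated by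
`{a_1 b_1 − st, a_1 c_1 − st, a_2 b_1 − st, a_2 c_1 − st, b_1 c_1 − st}`, is radical. -/
theorem joinMeetIdeal_L3_211_isRadical (K : Type*) [Field K] :
    (Ideal.span
      ({X V16.a1 * X V16.b1 - X V16.s * X V16.t,
        X V16.a1 * X V16.c1 - X V16.s * X V16.t,
        X V16.a2 * X V16.b1 - X V16.s * X V16.t,
        X V16.a2 * X V16.c1 - X V16.s * X V16.t,
        X V16.b1 * X V16.c1 - X V16.s * X V16.t} :
        Set (MvPolynomial V16 K))).IsRadical := by
  have := V16.isPrime_toricIdeal K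
  change (V16.joinMeetIdeal K).IsRadical
  rw [← Ideal.sup_span_singleton_inf_eq (V16.joinMeetIdeal_le_toricIdeal K)
    (V16.X_s_mul_X_t_notMem_toricIdeal K) fun p => V16.mul_X_s_mul_X_t_mem_joinMeetIdeal K]
  exact (V16.isRadical_joinMeetIdeal_sup_span_X_s_mul_X_t K).inf this.isRadical
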